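/- Let C be a Boolean circuit with n inputs, p advice inputs and only ¬- and ∧-gates, and let T_f, q_f, A_α and φ_α be the TBox, conjunctive query, ABoxes and CNFs constructed from C. Then for every α ∈ {0,1}^n: (T_f, A_α) ⊨ q_f if and only if φ_α is satisfiable. -/

import Mathlib

namespace QRew

/-! ### Boolean circuits.
A Boolean circuit with inputs indexed by `ι`, advice inputs indexed by `κ` and
gates `0, …, ℓ-1` (in topological order: each gate only uses earlier gates),
with a designated output gate.  Gates are labelled `¬` (one incoming edge),
`∧`/`∨` (two incoming edges) or are Boolean constants. -/

inductive Wire (ι κ : Type) (ℓ : ℕ) : Type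
  | input : ι → Wire ι κ ℓ
  | advice : κ → Wire ι κ ℓ
  | gate : Fin ℓ → Wire ι κ ℓ
  deriving DecidableEq

inductive GateDef (ι κ : Type) (ℓ : ℕ) : Type
  | tru : GateDef ι κ ℓ
  | fls : GateDef ι κ ℓ
  | not : Wire ι κ ℓ → GateDef ι κ ℓ
  | and : Wire ι κ ℓ → Wire ι κ ℓ → GateDef ι κ ℓ
  | or : Wire ι κ ℓ → Wire ι κ ℓ → GateDef ι κ ℓ

def Wire.gateBound {ι κ : Type} {ℓ : ℕ} : Wire ι κ ℓ → ℕ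
  | .gate g => g.val + 1
  | _ => 0

def GateDef.wires {ι κ : Type} {ℓ : ℕ} : GateDef ι κ ℓ → List (Wire ι κ ℓ)
  | .tru => []
  | .fls => []
  | .not w => [w]
  | .and w w' => [w, w']
  | .or w w' => [w, w']

structure Circuit (ι κ : Type) (ℓ : ℕ) where
  gate : Fin ℓ → GateDef ι κ ℓ
  out : Fin ℓ
  topo : ∀ i : Fin ℓ, ∀ w ∈ (gate i).wires, w.gateBound ≤ i.val

def Wire.evalWith {ι κ : Type} {ℓ : ℕ} (x : ι → Bool) (y : κ → Bool)
    (v : Fin ℓ → Bool) : Wire ι κ ℓ → Bool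
  | .input i => x i
  | .advice j => y j
  | .gate g => v g

def GateDef.evalWith {ι κ : Type} {ℓ : ℕ} (x : ι → Bool) (y : κ → Bool)
    (v : Fin ℓ → Bool) : GateDef ι κ ℓ → Bool
  | .tru => true
  | .fls => false
  | .not w => ! w.evalWith x y v
  | .and w w' => w.evalWith x y v && w'.evalWith x y v
  | .or w w' => w.evalWith x y v || w'.evalWith x y v

/-- The values of the gates of the circuit, computed in `k` rounds of
evaluation (by the topological-order condition, after `ℓ` rounds every gate
has its correct value). -/
def Circuit.gateVals {ι κ : Type} {ℓ : ℕ} (C : Circuit ι κ ℓ)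
    (x : ι → Bool) (y : κ → Bool) : ℕ → Fin ℓ → Bool
  | 0 => fun _ => false
  | (k + 1) => fun g => (C.gate g).evalWith x y (C.gateVals x y k)

/-- The output of gate `g` of the circuit on input `(x, y)`. -/
def Circuit.gateVal {ι κ : Type} {ℓ : ℕ} (C : Circuit ι κ ℓ)
    (x : ι → Bool) (y : κ → Bool) (g : Fin ℓ) : Bool :=
  C.gateVals x y ℓ g

/-- The output of the circuit on input `(x, y)`. -/
def Circuit.eval {ι κ : Type} {ℓ : ℕ} (C : Circuit ι κ ℓ)
    (x : ι → Bool) (y : κ → Bool) : Bool :=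
  C.gateVal x y C.out

/-- The size of a circuit: its number of nodes (inputs, advice inputs and gates). -/
noncomputable def Circuit.size {ι κ : Type} {ℓ : ℕ} (_ : Circuit ι κ ℓ) : ℕ :=
  Nat.card ι + Nat.card κ + ℓ

/-- A monotone circuit: one with no `¬`-gates. -/
def Circuit.MonotoneC {ι κ : Type} {ℓ : ℕ} (C : Circuit ι κ ℓ) : Prop :=
  ∀ (g : Fin ℓ) (w : Wire ι κ ℓ), C.gate g ≠ .not w

/-- A circuit using only `¬`- and `∧`-gates. -/
def Circuit.OnlyNotAnd {ι κ : Type} {ℓ : ℕ} (C : Circuit ι κ ℓ) : Prop :=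
  ∀ g : Fin ℓ, (∃ w, C.gate g = .not w) ∨ (∃ w w', C.gate g = .and w w')

/-- `C` nondeterministically computes `f` : for every input `a`,
`f a = 1` iff `C(a, b) = 1` for some advice `b`. -/
def NondetComputes {ι κ : Type} {ℓ : ℕ} (C : Circuit ι κ ℓ)
    (f : (ι → Bool) → Bool) : Prop :=
  ∀ a : ι → Bool, (f a = true ↔ ∃ b : κ → Bool, C.eval a b = true)

/-- A monotone Boolean function. -/
def MonotoneFun {ι : Type} (f : (ι → Bool) → Bool) : Prop :=
  ∀ a b : ι → Bool, (∀ i, a i = true → b i = true) → f a = true → f b = true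

/-! ### Boolean formulas -/

inductive BForm (V : Type) : Type
  | var : V → BForm V
  | tru : BForm V
  | fls : BForm V
  | not : BForm V → BForm V
  | and : BForm V → BForm V → BForm V
  | or : BForm V → BForm V → BForm V

def BForm.eval {V : Type} (v : V → Bool) : BForm V → Bool
  | .var x => v x
  | .tru => true
  | .fls => false
  | .not φ => ! φ.eval v
  | .and φ ψ => φ.eval v && ψ.eval v
  | .or φ ψ => φ.eval v || ψ.eval v

/-- Truth of a Boolean formula under a `Prop`-valued assignment of the variables. -/
def BForm.holds {V : Type} (v : V → Prop) : BForm V → Prop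
  | .var x => v x
  | .tru => True
  | .fls => False
  | .not φ => ¬ φ.holds v
  | .and φ ψ => φ.holds v ∧ ψ.holds v
  | .or φ ψ => φ.holds v ∨ ψ.holds v

/-- A monotone Boolean formula: no `¬`. -/
def BForm.MonotoneF {V : Type} : BForm V → Prop
  | .var _ => True
  | .tru => True
  | .fls => True
  | .not _ => False
  | .and φ ψ => φ.MonotoneF ∧ ψ.MonotoneF
  | .or φ ψ => φ.MonotoneF ∧ ψ.MonotoneF

def BForm.size {V : Type} : BForm V → ℕ
  | .var _ => 1
  | .tru => 1
  | .fls => 1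
  | .not φ => 1 + φ.size
  | .and φ ψ => 1 + φ.size + ψ.size
  | .or φ ψ => 1 + φ.size + ψ.size

def BForm.Computes {V : Type} (φ : BForm V) (f : (V → Bool) → Bool) : Prop :=
  ∀ v : V → Bool, φ.eval v = f v

end QRew
namespace QRew

/-! ### The Tseitin-style CNF `φ_α` of a circuit.

For a circuit `C` with inputs `x₁,…,x_n`, advice inputs `y₁,…,y_p` and gates
`g₁,…,g_ℓ` (using only `¬`- and `∧`-gates), the CNF `φ_α` has the variables
`x, y, g` (represented by `Wire (Fin n) (Fin p) ℓ`) and the clauses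
  * `¬x_j` for each `j` with `α_j = 0`;
  * the unit clause `g_out` (the output gate);
  * for each gate `g_i = ¬h_i` the clauses `(h_i ∨ ¬g_i)` and `(¬h_i ∨ g_i)`;
  * for each gate `g_i = h_i ∧ h_i'` the clauses `(h_i ∨ ¬g_i)`,
    `(h_i' ∨ ¬g_i)` and `(¬h_i ∨ ¬h_i' ∨ g_i)`.
Clause indices: `.neg j` is the clause `¬x_j`; `.out` is the clause `g_out`;
`.g i k` (`k < 3`) are the (at most three) clauses attached to gate `i`. -/

inductive ClIdx (n ℓ : ℕ) : Type
  | neg : Fin n → ClIdx n ℓ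
  | out : ClIdx n ℓ
  | g : Fin ℓ → Fin 3 → ClIdx n ℓ

/-- The positive literals of a clause of `φ_α`. -/
def clPos {n p ℓ : ℕ} (C : Circuit (Fin n) (Fin p) ℓ) :
    ClIdx n ℓ → List (Wire (Fin n) (Fin p) ℓ)
  | .neg _ => []
  | .out => [.gate C.out]
  | .g i k =>
    match C.gate i with
    | .tru => [.gate i]
    | .fls => []
    | .not h => if k.val = 1 then [.gate i] else [h]
    | .and h h' => if k.val = 0 then [h] else if k.val = 1 then [h'] else [.gate i]
    | .or h h' => if k.val = 2 then [h, h'] else [.gate i]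

/-- The negative literals of a clause of `φ_α`. -/
def clNeg {n p ℓ : ℕ} (C : Circuit (Fin n) (Fin p) ℓ) :
    ClIdx n ℓ → List (Wire (Fin n) (Fin p) ℓ)
  | .neg j => [.input j]
  | .out => []
  | .g i k =>
    match C.gate i with
    | .tru => []
    | .fls => [.gate i]
    | .not h => if k.val = 1 then [h] else [.gate i]
    | .and h h' => if k.val = 2 then [h, h'] else [.gate i]
    | .or h h' => if k.val = 2 then [.gate i] else if k.val = 0 then [h] else [h']

/-- Satisfaction of a clause of `φ_α` under an assignment `(a, b, c)` to the
variables `(x, y, g)`. -/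
def ClauseSat {n p ℓ : ℕ} (C : Circuit (Fin n) (Fin p) ℓ)
    (a : Fin n → Bool) (b : Fin p → Bool) (c : Fin ℓ → Bool) (j : ClIdx n ℓ) : Prop :=
  (∃ w ∈ clPos C j, w.evalWith a b c = true) ∨ (∃ w ∈ clNeg C j, w.evalWith a b c = false)

/-- The clauses of `φ_α`: all of them except that the clause `¬x_j` is present
only when `α_j = 0`. -/
def ActiveCl {n ℓ : ℕ} (α : Fin n → Bool) : ClIdx n ℓ → Prop
  | .neg j => α j = false
  | _ => True

/-- Satisfiability of the CNF `φ_α`. -/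
def PhiSat {n p ℓ : ℕ} (C : Circuit (Fin n) (Fin p) ℓ) (α : Fin n → Bool) : Prop :=
  ∃ (a : Fin n → Bool) (b : Fin p → Bool) (c : Fin ℓ → Bool),
    ∀ j : ClIdx n ℓ, ActiveCl α j → ClauseSat C a b c j

end QRew
namespace QRew

/-! ### OWL 2 QL: syntax and semantics.

A signature consists of individual constants (a type `K`), concept names
(a type `CN`) and role names (a type `RN`). -/

/-- Roles: role names and their inverses. -/
inductive Role (RN : Type) : Type
  | pos : RN → Role RN
  | inv : RN → Role RN

/-- Basic concepts: `⊥`, concept names, `∃R`. -/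
inductive BCon (CN RN : Type) : Type
  | bot : BCon CN RN
  | atom : CN → BCon CN RN
  | exr : Role RN → BCon CN RN

/-- Concepts: basic concepts and `∃R.B`. -/
inductive Con (CN RN : Type) : Type
  | bc : BCon CN RN → Con CN RN
  | exrb : Role RN → BCon CN RN → Con CN RN

/-- OWL 2 QL TBox axioms: `B ⊑ C`, `R₁ ⊑ R₂`, `B₁ ⊓ B₂ ⊑ ⊥`, `R₁ ⊓ R₂ ⊑ ⊥`. -/
inductive Ax (CN RN : Type) : Type
  | sub : BCon CN RN → Con CN RN → Ax CN RN
  | rsub : Role RN → Role RN → Ax CN RN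
  | disj : BCon CN RN → BCon CN RN → Ax CN RN
  | rdisj : Role RN → Role RN → Ax CN RN

/-- A first-order interpretation of the signature `(K, CN, RN)`,
with a nonempty domain. -/
structure Interp (K CN RN : Type) where
  Dom : Type
  ne : Nonempty Dom
  ind : K → Dom
  conc : CN → Dom → Prop
  role : RN → Dom → Dom → Prop

def Role.sem {K CN RN : Type} (I : Interp K CN RN) : Role RN → I.Dom → I.Dom → Prop
  | .pos P => I.role P
  | .inv P => fun u v => I.role P v u

def BCon.sem {K CN RN : Type} (I : Interp K CN RN) : BCon CN RN → I.Dom → Prop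
  | .bot => fun _ => False
  | .atom A => I.conc A
  | .exr R => fun u => ∃ v, R.sem I u v

def Con.sem {K CN RN : Type} (I : Interp K CN RN) : Con CN RN → I.Dom → Prop
  | .bc B => B.sem I
  | .exrb R B => fun u => ∃ v, R.sem I u v ∧ B.sem I v

def Ax.sem {K CN RN : Type} (I : Interp K CN RN) : Ax CN RN → Prop
  | .sub B c => ∀ u, B.sem I u → c.sem I u
  | .rsub R R' => ∀ u v, R.sem I u v → R'.sem I u v
  | .disj B B' => ∀ u, B.sem I u → B'.sem I u → False
  | .rdisj R R' => ∀ u v, R.sem I u v → R'.sem I u v → False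

/-- Ground atoms (ABox assertions). -/
inductive GAtom (K CN RN : Type) : Type
  | conc : CN → K → GAtom K CN RN
  | role : RN → K → K → GAtom K CN RN

def GAtom.sem {K CN RN : Type} (I : Interp K CN RN) : GAtom K CN RN → Prop
  | .conc A a => I.conc A (I.ind a)
  | .role P a b => I.role P (I.ind a) (I.ind b)

/-- An ABox: a finite set (list) of ground atoms. -/
abbrev ABox (K CN RN : Type) := List (GAtom K CN RN)

/-- First-order terms over the constants `K`. -/
inductive Term (K : Type) : Type
  | var : ℕ → Term K
  | const : K → Term K
  deriving DecidableEq

def Term.sem {K CN RN : Type} (I : Interp K CN RN) (v : ℕ → I.Dom) : Term K → I.Dom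
  | .var x => v x
  | .const a => I.ind a

/-- Atoms of conjunctive queries. -/
inductive CQAtom (K CN RN : Type) : Type
  | conc : CN → Term K → CQAtom K CN RN
  | role : RN → Term K → Term K → CQAtom K CN RN

def CQAtom.sem {K CN RN : Type} (I : Interp K CN RN) (v : ℕ → I.Dom) :
    CQAtom K CN RN → Prop
  | .conc A t => I.conc A (t.sem I v)
  | .role P t t' => I.role P (t.sem I v) (t'.sem I v)

/-- A Boolean conjunctive query: a list of atoms, all of whose variables are
(implicitly) existentially quantified. -/
abbrev CQ (K CN RN : Type) := List (CQAtom K CN RN)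

def CQ.sem {K CN RN : Type} (I : Interp K CN RN) (q : CQ K CN RN) : Prop :=
  have := I.ne
  ∃ v : ℕ → I.Dom, ∀ a ∈ q, a.sem I v

/-- Certain answer to a Boolean CQ: `(T, A) ⊨ q` iff `q` holds in every
first-order model of `T ∪ A`. -/
def Entails {K CN RN : Type} (T : List (Ax CN RN)) (A : ABox K CN RN)
    (q : CQ K CN RN) : Prop :=
  ∀ I : Interp K CN RN, (∀ ax ∈ T, ax.sem I) → (∀ g ∈ A, g.sem I) → CQ.sem I q

/-- The interpretation `I_A` of an ABox `A`: its domain consists of all the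
constants of the signature and a ground atom holds in it iff it belongs to `A`. -/
def IA {K CN RN : Type} [hK : Nonempty K] (A : ABox K CN RN) : Interp K CN RN where
  Dom := K
  ne := hK
  ind := id
  conc := fun c a => GAtom.conc c a ∈ A
  role := fun P a b => GAtom.role P a b ∈ A

/-! ### First-order formulas over a signature (no built-in predicates,
in particular no equality). -/

inductive FO (K CN RN : Type) : Type
  | conc : CN → Term K → FO K CN RN
  | role : RN → Term K → Term K → FO K CN RN
  | and : FO K CN RN → FO K CN RN → FO K CN RN
  | or : FO K CN RN → FO K CN RN → FO K CN RN
  | not : FO K CN RN → FO K CN RN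
  | ex : ℕ → FO K CN RN → FO K CN RN
  | all : ℕ → FO K CN RN → FO K CN RN

def FO.sem {K CN RN : Type} (I : Interp K CN RN) (v : ℕ → I.Dom) : FO K CN RN → Prop
  | .conc A t => I.conc A (t.sem I v)
  | .role P t t' => I.role P (t.sem I v) (t'.sem I v)
  | .and φ ψ => φ.sem I v ∧ ψ.sem I v
  | .or φ ψ => φ.sem I v ∨ ψ.sem I v
  | .not φ => ¬ φ.sem I v
  | .ex x φ => ∃ u : I.Dom, φ.sem I (Function.update v x u)
  | .all x φ => ∀ u : I.Dom, φ.sem I (Function.update v x u)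

/-- Truth of a formula in an interpretation (for sentences this is the usual
notion of truth; free variables are read universally). -/
def FO.holds {K CN RN : Type} (I : Interp K CN RN) (φ : FO K CN RN) : Prop :=
  ∀ v : ℕ → I.Dom, φ.sem I v

def Term.fv {K : Type} : Term K → Set ℕ
  | .var x => {x}
  | .const _ => ∅

/-- Free variables of a first-order formula. -/
def FO.free {K CN RN : Type} : FO K CN RN → Set ℕ
  | .conc _ t => t.fv
  | .role _ t t' => t.fv ∪ t'.fv
  | .and φ ψ => φ.free ∪ ψ.free
  | .or φ ψ => φ.free ∪ ψ.free
  | .not φ => φ.free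
  | .ex x φ => φ.free \ {x}
  | .all x φ => φ.free \ {x}

/-- Positive existential formulas: built from atoms using only `∧`, `∨`, `∃`. -/
def FO.IsPE {K CN RN : Type} : FO K CN RN → Prop
  | .conc _ _ => True
  | .role _ _ _ => True
  | .and φ ψ => φ.IsPE ∧ ψ.IsPE
  | .or φ ψ => φ.IsPE ∧ ψ.IsPE
  | .not _ => False
  | .ex _ φ => φ.IsPE
  | .all _ _ => False

/-- The size (number of symbols) of a first-order formula. -/
def FO.size {K CN RN : Type} : FO K CN RN → ℕ
  | .conc _ _ => 2
  | .role _ _ _ => 3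
  | .and φ ψ => 3 + φ.size + ψ.size
  | .or φ ψ => 3 + φ.size + ψ.size
  | .not φ => 1 + φ.size
  | .ex _ φ => 2 + φ.size
  | .all _ φ => 2 + φ.size

/-- `q'` is an FO-rewriting for the Boolean CQ `q` and the TBox `T` over the
signature `(K, CN, RN)`: for every ABox `A` over the signature,
`(T, A) ⊨ q` iff `I_A ⊨ q'`. -/
def IsFORewriting {K CN RN : Type} [Nonempty K] (T : List (Ax CN RN))
    (q : CQ K CN RN) (q' : FO K CN RN) : Prop :=
  ∀ A : ABox K CN RN, Entails T A q ↔ FO.holds (IA A) q'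

/-- A positive existential (PE-) rewriting. -/
def IsPERewriting {K CN RN : Type} [Nonempty K] (T : List (Ax CN RN))
    (q : CQ K CN RN) (q' : FO K CN RN) : Prop :=
  IsFORewriting T q q' ∧ q'.IsPE

/-! Sizes of TBoxes and queries (numbers of symbols). -/

def BCon.size {CN RN : Type} : BCon CN RN → ℕ
  | .bot => 1
  | .atom _ => 1
  | .exr _ => 2

def Con.size {CN RN : Type} : Con CN RN → ℕ
  | .bc B => B.size
  | .exrb _ B => 2 + B.size

def Ax.size {CN RN : Type} : Ax CN RN → ℕ
  | .sub B c => 1 + B.size + c.size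
  | .rsub _ _ => 3
  | .disj B B' => 2 + B.size + B'.size
  | .rdisj _ _ => 4

def tbSize {CN RN : Type} (T : List (Ax CN RN)) : ℕ := (T.map Ax.size).sum

def CQAtom.size {K CN RN : Type} : CQAtom K CN RN → ℕ
  | .conc _ _ => 2
  | .role _ _ _ => 3

def cqSize {K CN RN : Type} (q : CQ K CN RN) : ℕ := (q.map CQAtom.size).sum

/-! Maps of syntax along signature inclusions. -/

def Role.map {RN RN' : Type} (fR : RN → RN') : Role RN → Role RN'
  | .pos P => .pos (fR P)
  | .inv P => .inv (fR P)

def BCon.map {CN RN CN' RN' : Type} (fC : CN → CN') (fR : RN → RN') :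
    BCon CN RN → BCon CN' RN'
  | .bot => .bot
  | .atom A => .atom (fC A)
  | .exr R => .exr (R.map fR)

def Con.map {CN RN CN' RN' : Type} (fC : CN → CN') (fR : RN → RN') :
    Con CN RN → Con CN' RN'
  | .bc B => .bc (B.map fC fR)
  | .exrb R B => .exrb (R.map fR) (B.map fC fR)

def Ax.map {CN RN CN' RN' : Type} (fC : CN → CN') (fR : RN → RN') :
    Ax CN RN → Ax CN' RN'
  | .sub B c => .sub (B.map fC fR) (c.map fC fR)
  | .rsub R R' => .rsub (R.map fR) (R'.map fR)
  | .disj B B' => .disj (B.map fC fR) (B'.map fC fR)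
  | .rdisj R R' => .rdisj (R.map fR) (R'.map fR)

def Term.map {K K' : Type} (fK : K → K') : Term K → Term K'
  | .var x => .var x
  | .const a => .const (fK a)

def CQAtom.map {K CN RN K' CN' RN' : Type} (fK : K → K') (fC : CN → CN')
    (fR : RN → RN') : CQAtom K CN RN → CQAtom K' CN' RN'
  | .conc A t => .conc (fC A) (t.map fK)
  | .role P t t' => .role (fR P) (t.map fK) (t'.map fK)

def CQ.map {K CN RN K' CN' RN' : Type} (fK : K → K') (fC : CN → CN')
    (fR : RN → RN') (q : CQ K CN RN) : CQ K' CN' RN' :=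
  List.map (CQAtom.map fK fC fR) q

instance sumNonemptyLeft {α β : Type} [Nonempty α] : Nonempty (α ⊕ β) :=
  ⟨Sum.inl (Classical.arbitrary α)⟩

end QRew
namespace QRew

/-! ### The TBox `T_f`, CQ `q_f` and ABoxes `A_α` associated with a circuit.

Given a circuit `C` with `n` inputs, `p` advice inputs and `ℓ` gates, the
variables `p_1, …, p_N` (`N = n + p + ℓ`) of its Tseitin CNF are the inputs,
advice inputs and gates, and the clauses `C_1, …, C_d` (`d = n + 1 + 3ℓ`) of
`φ_{(0,…,0)}` are listed so that `C_j = ¬x_j` for `1 ≤ j ≤ n`, then the unit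
output clause, then the gate clauses.  The signature `Σ_f` consists of a
single individual constant `a` (the type `Unit`), the concept names
`A_0, …, A_N`, `X_i^0, X_i^1` (`1 ≤ i ≤ N`), `Z_{i,j}` (`0 ≤ i ≤ N`,
`1 ≤ j ≤ d`) and a single role name `P` (the type `Unit`). -/

/-- Concept names of the signature `Σ_f`:  `A i` for `0 ≤ i ≤ N`, `X i ℓ`
for `1 ≤ i ≤ N` (an index `i : Fin N` represents the variable `p_{i+1}`),
and `Z i j` for `0 ≤ i ≤ N`, `1 ≤ j ≤ d`. -/
inductive CName (N d : ℕ) : Type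
  | A : Fin (N + 1) → CName N d
  | X : Fin N → Bool → CName N d
  | Z : Fin (N + 1) → Fin d → CName N d

/-- The `i`-th variable of the CNF (`i < N = n + p + ℓ`): first the inputs,
then the advice inputs, then the gates. -/
def wOf (n p ℓ : ℕ) (i : Fin (n + p + ℓ)) : Wire (Fin n) (Fin p) ℓ :=
  if h : i.val < n then .input ⟨i.val, h⟩
  else if h2 : i.val < n + p then .advice ⟨i.val - n, by omega⟩
  else .gate ⟨i.val - n - p, by have hi := i.isLt; omega⟩

/-- The `j`-th clause of `φ_{(0,…,0)}` (`j < d = n + 1 + 3ℓ`): the clauses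
`¬x_1, …, ¬x_n` first, then the output clause, then the gate clauses. -/
def clOf (n ℓ : ℕ) (j : Fin (n + 1 + 3 * ℓ)) : ClIdx n ℓ :=
  if h : j.val < n then .neg ⟨j.val, h⟩
  else if h2 : j.val = n then .out
  else .g ⟨(j.val - n - 1) / 3, by
        have hj := j.isLt
        exact Nat.div_lt_of_lt_mul (by omega)⟩
      ⟨(j.val - n - 1) % 3, Nat.mod_lt _ (by norm_num)⟩

/-- The TBox `T_f` associated with the circuit `C` (over the signature `Σ_f`):
for `1 ≤ i ≤ N`, `1 ≤ j ≤ d` and `ℓ ∈ {0,1}` it contains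
`A_{i-1} ⊑ ∃P⁻.X_i^ℓ`,  `X_i^ℓ ⊑ A_i`,  `X_i^0 ⊑ Z_{i,j}` if `¬p_i ∈ C_j`,
`X_i^1 ⊑ Z_{i,j}` if `p_i ∈ C_j`,  `Z_{i,j} ⊑ ∃P.Z_{i-1,j}`,
`A_0 ⊓ A_i ⊑ ⊥`,  `A_0 ⊓ ∃P ⊑ ⊥`, and `A_0 ⊓ Z_{i,j} ⊑ ⊥` for
`(i,j) ∉ {(0,1), …, (0,n)}`. -/
def Tf {n p ℓ : ℕ} (C : Circuit (Fin n) (Fin p) ℓ) :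
    List (Ax (CName (n + p + ℓ) (n + 1 + 3 * ℓ)) Unit) :=
  ((List.finRange (n + p + ℓ)).flatMap fun i =>
    [false, true].flatMap fun b =>
      [Ax.sub (.atom (.A i.castSucc)) (.exrb (.inv ()) (.atom (.X i b))),
       Ax.sub (.atom (.X i b)) (.bc (.atom (.A i.succ)))])
  ++
  ((List.finRange (n + p + ℓ)).flatMap fun i =>
    (List.finRange (n + 1 + 3 * ℓ)).flatMap fun j =>
      (if wOf n p ℓ i ∈ clNeg C (clOf n ℓ j) then
          [Ax.sub (.atom (.X i false)) (.bc (.atom (.Z i.succ j)))] else [])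
      ++
      (if wOf n p ℓ i ∈ clPos C (clOf n ℓ j) then
          [Ax.sub (.atom (.X i true)) (.bc (.atom (.Z i.succ j)))] else []))
  ++
  ((List.finRange (n + p + ℓ)).flatMap fun i =>
    (List.finRange (n + 1 + 3 * ℓ)).map fun j =>
      Ax.sub (.atom (.Z i.succ j)) (.exrb (.pos ()) (.atom (.Z i.castSucc j))))
  ++
  ((List.finRange (n + p + ℓ)).map fun i =>
    Ax.disj (.atom (.A 0)) (.atom (.A i.succ)))
  ++
  [Ax.disj (.atom (.A 0)) (.exr (.pos ()))]
  ++
  ((List.finRange (n + p + ℓ + 1)).flatMap fun i =>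
    (List.finRange (n + 1 + 3 * ℓ)).flatMap fun j =>
      if i.val = 0 ∧ j.val < n then []
      else [Ax.disj (.atom (.A 0)) (.atom (.Z i j))])

/-- The variable of the CQ `q_f` playing the role of `z_{i,j}`
(the variables `0, …, N` play the role of `y_0, …, y_N`). -/
def zV (N j i : ℕ) : ℕ := N + 1 + j * N + i

/-- The Boolean conjunctive query `q_f` :
`∃ȳ∃z̄ [A₀(y₀) ∧ ⋀_{i=1}^N P(y_i, y_{i-1})
   ∧ ⋀_{j=1}^d (P(y_N, z_{N-1,j}) ∧ ⋀_{i=1}^{N-1} P(z_{i,j}, z_{i-1,j}) ∧ Z_{0,j}(z_{0,j}))]`. -/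
def qf (n p ℓ : ℕ) : CQ Unit (CName (n + p + ℓ) (n + 1 + 3 * ℓ)) Unit :=
  [CQAtom.conc (.A 0) (.var 0)]
  ++
  ((List.finRange (n + p + ℓ)).map fun i =>
    CQAtom.role () (.var (i.val + 1)) (.var i.val))
  ++
  ((List.finRange (n + 1 + 3 * ℓ)).flatMap fun j =>
    [CQAtom.role () (.var (n + p + ℓ)) (.var (zV (n + p + ℓ) j.val (n + p + ℓ - 1)))]
    ++
    ((List.finRange (n + p + ℓ - 1)).map fun i =>
      CQAtom.role () (.var (zV (n + p + ℓ) j.val (i.val + 1)))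
        (.var (zV (n + p + ℓ) j.val i.val)))
    ++
    [CQAtom.conc (.Z 0 j) (.var (zV (n + p + ℓ) j.val 0))])

/-- The ABox `A_α = {A₀(a)} ∪ {Z_{0,j}(a) : 1 ≤ j ≤ n, α_j = 1}` over the
signature `Σ_f` (whose only individual constant is `a`). -/
def Aalpha (n p ℓ : ℕ) (α : Fin n → Bool) :
    ABox Unit (CName (n + p + ℓ) (n + 1 + 3 * ℓ)) Unit :=
  GAtom.conc (.A 0) () ::
    ((List.finRange n).filterMap fun j =>
      if α j then some (GAtom.conc (.Z 0 ⟨j.val, by have := j.isLt; omega⟩) ()) else none)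

end QRew
namespace QRew


section Aux

variable {n p ℓ : ℕ}

lemma wOf_surj (w : Wire (Fin n) (Fin p) ℓ) : ∃ i : Fin (n + p + ℓ), wOf n p ℓ i = w := by
  rcases w with j | k | g
  · refine ⟨⟨j.val, by omega⟩, ?_⟩
    simp [wOf, j.isLt]
  · refine ⟨⟨n + k.val, by have := k.isLt; omega⟩, ?_⟩
    have h1 : ¬ (n + k.val < n) := by omega
    have h2 : n + k.val < n + p := by have := k.isLt; omega
    simp [wOf, h1, h2]
  · refine ⟨⟨n + p + g.val, by have := g.isLt; omega⟩, ?_⟩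
    have h1 : ¬ (n + p + g.val < n) := by omega
    have h2 : ¬ (n + p + g.val < n + p) := by omega
    simp [wOf, h1, h2]
    exact Fin.ext (by simp; omega)

lemma clOf_surj (c : ClIdx n ℓ) : ∃ j : Fin (n + 1 + 3 * ℓ), clOf n ℓ j = c := by
  rcases c with j | _ | ⟨i, k⟩
  · refine ⟨⟨j.val, by omega⟩, ?_⟩
    simp [clOf, j.isLt]
  · refine ⟨⟨n, by omega⟩, ?_⟩
    have h1 : ¬ (n < n) := by omega
    simp [clOf, h1]
  · refine ⟨⟨n + 1 + 3 * i.val + k.val, by have := i.isLt; have := k.isLt; omega⟩, ?_⟩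
    have h1 : ¬ (n + 1 + 3 * i.val + k.val < n) := by omega
    have h2 : ¬ (n + 1 + 3 * i.val + k.val = n) := by omega
    simp [clOf, h1, h2]
    constructor
    · exact Fin.ext (by have := k.isLt; simp; omega)
    · exact Fin.ext (by have := k.isLt; simp; omega)

lemma clOf_neg {j : Fin (n + 1 + 3 * ℓ)} {j' : Fin n} (h : clOf n ℓ j = .neg j') :
    j.val < n ∧ j'.val = j.val := by
  unfold clOf at h
  split at h
  · exact ⟨by assumption, by cases h; simp⟩
  · split at h <;> cases h

lemma not_active {α : Fin n → Bool} {c : ClIdx n ℓ} (h : ¬ ActiveCl α c) :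
    ∃ j', c = .neg j' ∧ α j' = true := by
  rcases c with j' | _ | ⟨i, k⟩
  · refine ⟨j', rfl, ?_⟩
    simp [ActiveCl] at h
    exact h
  · exact absurd trivial h
  · exact absurd trivial h

end Aux

/-- Domain of the canonical model. -/
inductive CDom (N d : ℕ) : Type
  | root : CDom N d
  | br : Fin N → (ℕ → Bool) → CDom N d
  | ch : ℕ → Fin d → CDom N d

section Canon

variable {n p ℓ : ℕ}

/-- literal `p_k` with value `b` occurs in clause `j` -/
def LitIn (C : Circuit (Fin n) (Fin p) ℓ) (k : Fin (n + p + ℓ)) (b : Bool)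
    (j : Fin (n + 1 + 3 * ℓ)) : Prop :=
  if b then wOf n p ℓ k ∈ clPos C (clOf n ℓ j) else wOf n p ℓ k ∈ clNeg C (clOf n ℓ j)

/-- The canonical model of `(T_f, A_α)`. -/
def canonI (C : Circuit (Fin n) (Fin p) ℓ) (α : Fin n → Bool) :
    Interp Unit (CName (n + p + ℓ) (n + 1 + 3 * ℓ)) Unit where
  Dom := CDom (n + p + ℓ) (n + 1 + 3 * ℓ)
  ne := ⟨.root⟩
  ind := fun _ => .root
  conc := fun cn x =>
    match cn, x with
    | .A i, .root => i.val = 0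
    | .A i, .br k _ => i.val = k.val + 1
    | .A _, .ch _ _ => False
    | .X i b, .br k c => i = k ∧ c k.val = b
    | .X _ _, .root => False
    | .X _ _, .ch _ _ => False
    | .Z i j, .root => i.val = 0 ∧ ∃ h : j.val < n, α ⟨j.val, h⟩ = true
    | .Z i j, .br k c => i.val = k.val + 1 ∧ LitIn C k (c k.val) j
    | .Z i j, .ch k j' => i.val = k ∧ j = j'
  role := fun _ x y =>
    match x, y with
    | .br k _, .root => k.val = 0
    | .br k c, .br k' c' => k.val = k'.val + 1 ∧ ∀ m ≤ k'.val, c m = c' m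
    | .br k c, .ch k' j => k' = k.val ∧ LitIn C k (c k.val) j
    | .ch k j, .ch k' j' => k = k' + 1 ∧ j = j'
    | _, _ => False

variable {C : Circuit (Fin n) (Fin p) ℓ} {α : Fin n → Bool}

lemma canon_ax1 (i : Fin (n + p + ℓ)) (b : Bool) :
    (Ax.sub (.atom (.A i.castSucc)) (.exrb (.inv ()) (.atom (.X i b)))).sem (canonI C α) := by
  simp only [Ax.sem, Con.sem, BCon.sem, Role.sem]
  intro u hu
  cases u with
  | root =>
      have h0 : i.val = 0 := by simpa [canonI] using hu
      exact ⟨.br i (fun _ => b), by simp [canonI, h0], by simp [canonI]⟩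
  | br k c =>
      have hk : i.val = k.val + 1 := by simpa [canonI] using hu
      refine ⟨.br i (fun m => if m = i.val then b else c m), ?_, ?_⟩
      · exact ⟨hk, fun m hm => by simp only []; rw [if_neg (by omega)]⟩
      · simp [canonI]
  | ch k j => exact absurd hu (by simp [canonI])

lemma canon_ax2 (i : Fin (n + p + ℓ)) (b : Bool) :
    (Ax.sub (.atom (.X i b)) (.bc (.atom (.A i.succ)))).sem (canonI C α) := by
  simp only [Ax.sem, Con.sem, BCon.sem]
  intro u hu
  cases u with
  | root => exact absurd hu (by simp [canonI])
  | br k c =>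
      obtain ⟨rfl, -⟩ : i = k ∧ c k.val = b := by simpa [canonI] using hu
      simp [canonI]
  | ch k j => exact absurd hu (by simp [canonI])

lemma canon_ax3neg {i : Fin (n + p + ℓ)} {j : Fin (n + 1 + 3 * ℓ)}
    (hm : wOf n p ℓ i ∈ clNeg C (clOf n ℓ j)) :
    (Ax.sub (.atom (.X i false)) (.bc (.atom (.Z i.succ j)))).sem (canonI C α) := by
  simp only [Ax.sem, Con.sem, BCon.sem]
  intro u hu
  cases u with
  | root => exact absurd hu (by simp [canonI])
  | br k c =>
      obtain ⟨rfl, hc⟩ : i = k ∧ c k.val = false := by simpa [canonI] using hu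
      simp [canonI, LitIn, hc, hm]
  | ch k j => exact absurd hu (by simp [canonI])

lemma canon_ax3pos {i : Fin (n + p + ℓ)} {j : Fin (n + 1 + 3 * ℓ)}
    (hm : wOf n p ℓ i ∈ clPos C (clOf n ℓ j)) :
    (Ax.sub (.atom (.X i true)) (.bc (.atom (.Z i.succ j)))).sem (canonI C α) := by
  simp only [Ax.sem, Con.sem, BCon.sem]
  intro u hu
  cases u with
  | root => exact absurd hu (by simp [canonI])
  | br k c =>
      obtain ⟨rfl, hc⟩ : i = k ∧ c k.val = true := by simpa [canonI] using hu
      simp [canonI, LitIn, hc, hm]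
  | ch k j => exact absurd hu (by simp [canonI])

lemma canon_ax4 (i : Fin (n + p + ℓ)) (j : Fin (n + 1 + 3 * ℓ)) :
    (Ax.sub (.atom (.Z i.succ j)) (.exrb (.pos ()) (.atom (.Z i.castSucc j)))).sem
      (canonI C α) := by
  simp only [Ax.sem, Con.sem, BCon.sem, Role.sem]
  intro u hu
  cases u with
  | root => simp [canonI] at hu
  | br k c =>
      obtain ⟨hk, hl⟩ : i.val + 1 = k.val + 1 ∧ LitIn C k (c k.val) j := by
        simpa [canonI] using hu
      refine ⟨.ch i.val j, ?_, by simp [canonI]⟩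
      simp only [canonI]
      exact ⟨by omega, hl⟩
  | ch k j' =>
      obtain ⟨hk, rfl⟩ : i.val + 1 = k ∧ j = j' := by simpa [canonI] using hu
      exact ⟨.ch i.val j, ⟨by omega, rfl⟩, by simp [canonI]⟩

lemma canon_ax5 (i : Fin (n + p + ℓ)) :
    (Ax.disj (.atom (.A 0)) (.atom (.A i.succ))).sem (canonI C α) := by
  simp only [Ax.sem, BCon.sem]
  intro u h1 h2
  cases u <;> simp [canonI] at h1 h2 <;> omega

lemma canon_ax6 :
    (Ax.disj (.atom (.A 0)) (.exr (.pos ()))).sem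
      (canonI C α : Interp Unit (CName (n + p + ℓ) (n + 1 + 3 * ℓ)) Unit) := by
  simp only [Ax.sem, BCon.sem, Role.sem]
  intro u h1 h2
  cases u with
  | root => obtain ⟨v, hv⟩ := h2; cases v <;> simp [canonI] at hv
  | br k c => simp [canonI] at h1
  | ch k j => simp [canonI] at h1

lemma canon_ax7 {i : Fin (n + p + ℓ + 1)} {j : Fin (n + 1 + 3 * ℓ)}
    (hc : ¬(i.val = 0 ∧ j.val < n)) :
    (Ax.disj (.atom (.A 0)) (.atom (.Z i j))).sem (canonI C α) := by
  simp only [Ax.sem, BCon.sem]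
  intro u h1 h2
  cases u with
  | root =>
      obtain ⟨hi, hj, -⟩ : i.val = 0 ∧ ∃ h : j.val < n, α ⟨j.val, h⟩ = true := by
        simpa [canonI] using h2
      exact hc ⟨hi, hj⟩
  | br k c => simp [canonI] at h1
  | ch k j => simp [canonI] at h1

lemma canon_models_Tf : ∀ ax ∈ Tf C, ax.sem (canonI C α) := by
  intro ax hax
  simp only [Tf, List.mem_append, List.mem_flatMap, List.mem_map, List.mem_finRange,
    List.mem_cons, List.mem_singleton, List.not_mem_nil, true_and, or_false, false_or,
    List.mem_ite_nil_right, List.mem_ite_nil_left] at hax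
  rcases hax with ((((h | h) | h) | h) | rfl) | h
  · obtain ⟨i, b, -, (rfl | rfl)⟩ := h
    · exact canon_ax1 i b
    · exact canon_ax2 i b
  · obtain ⟨i, j, (⟨hm, rfl⟩ | ⟨hm, rfl⟩)⟩ := h
    · exact canon_ax3neg hm
    · exact canon_ax3pos hm
  · obtain ⟨i, j, rfl⟩ := h
    exact canon_ax4 i j
  · obtain ⟨i, rfl⟩ := h
    exact canon_ax5 i
  · exact canon_ax6
  · obtain ⟨i, j, hcond, rfl⟩ := h
    exact canon_ax7 hcond

lemma canon_models_A : ∀ g ∈ Aalpha n p ℓ α, g.sem (canonI C α) := by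
  intro g hg
  simp only [Aalpha, List.mem_cons, List.mem_filterMap, List.mem_finRange, true_and] at hg
  rcases hg with rfl | ⟨j, hj⟩
  · show (canonI C α).conc (.A 0) ((canonI C α).ind ())
    simp [canonI]
  · rcases hja : α j with _ | _
    · rw [hja] at hj; simp at hj
    · rw [hja] at hj; simp at hj
      subst hj
      show (canonI C α).conc _ ((canonI C α).ind ())
      refine ⟨rfl, j.isLt, ?_⟩
      simpa using hja

lemma clOf_lt {j : Fin (n + 1 + 3 * ℓ)} (h : j.val < n) :
    clOf n ℓ j = .neg ⟨j.val, h⟩ := by simp [clOf, h]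

lemma evalWith_wOf (ν : ℕ → Bool) (i : Fin (n + p + ℓ)) :
    (wOf n p ℓ i).evalWith (fun j : Fin n => ν j.val) (fun q : Fin p => ν (n + q.val))
      (fun g : Fin ℓ => ν (n + p + g.val)) = ν i.val := by
  unfold wOf
  split
  · simp [Wire.evalWith]
  · split
    · simp only [Wire.evalWith]; congr 1; omega
    · simp only [Wire.evalWith]; congr 1; omega

/-- Invariant along the `z`-path of the query in the canonical model. -/
def GoodP (C : Circuit (Fin n) (Fin p) ℓ) (ν : ℕ → Bool) (i : ℕ)
    (x : CDom (n + p + ℓ) (n + 1 + 3 * ℓ)) : Prop :=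
  (∃ (k : Fin (n + p + ℓ)) (c : ℕ → Bool), x = .br k c ∧ k.val + 1 = i ∧ ∀ m < i, c m = ν m)
  ∨ (∃ j' : Fin (n + 1 + 3 * ℓ), x = .ch i j' ∧
      ∃ kk : Fin (n + p + ℓ), LitIn C kk (ν kk.val) j')
  ∨ (x = .root ∧ i = 0)

lemma good_step {ν : ℕ → Bool} {i : ℕ} {x y : CDom (n + p + ℓ) (n + 1 + 3 * ℓ)}
    (hg : GoodP C ν (i + 1) x) (hr : (canonI C α).role () x y) : GoodP C ν i y := by
  rcases hg with ⟨k, c, rfl, hk, hag⟩ | ⟨j', rfl, hsat⟩ | ⟨rfl, h0⟩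
  · cases y with
    | root =>
        have h0 : k.val = 0 := hr
        right; right; exact ⟨rfl, by omega⟩
    | br k' c' =>
        obtain ⟨hkk, hagr⟩ : k.val = k'.val + 1 ∧ ∀ m ≤ k'.val, c m = c' m := hr
        left
        exact ⟨k', c', rfl, by omega,
          fun m hm => by rw [← hagr m (by omega), hag m (by omega)]⟩
    | ch k'' j' =>
        obtain ⟨hkk, hlit⟩ : k'' = k.val ∧ LitIn C k (c k.val) j' := hr
        right; left
        have hki : k'' = i := by omega
        subst hki
        refine ⟨j', rfl, k, ?_⟩
        rw [← hag k.val (by omega)]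
        exact hlit
  · cases y with
    | root => exact hr.elim
    | br k' c' => exact hr.elim
    | ch k' j'' =>
        obtain ⟨hkk, hjj⟩ : i + 1 = k' + 1 ∧ j' = j'' := hr
        right; left
        refine ⟨j'', ?_, hjj ▸ hsat⟩
        rw [show k' = i by omega]
  · cases y <;> exact hr.elim

lemma qf_mem0 : CQAtom.conc (.A 0) (.var 0) ∈ qf n p ℓ := by simp [qf]

lemma qf_mem1 (m : ℕ) (hm : m < n + p + ℓ) :
    CQAtom.role () (.var (m + 1)) (.var m) ∈ qf n p ℓ := by
  simp only [qf, List.mem_append, List.mem_map, List.mem_flatMap, List.mem_finRange,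
    List.mem_cons, List.mem_singleton, List.not_mem_nil, or_false, false_or, true_and]
  exact Or.inl (Or.inr ⟨⟨m, hm⟩, rfl⟩)

lemma qf_mem2 (j : Fin (n + 1 + 3 * ℓ)) :
    CQAtom.role () (.var (n + p + ℓ)) (.var (zV (n + p + ℓ) j.val (n + p + ℓ - 1)))
      ∈ qf n p ℓ := by
  simp only [qf, List.mem_append, List.mem_map, List.mem_flatMap, List.mem_finRange,
    List.mem_cons, List.mem_singleton, List.not_mem_nil, or_false, false_or, true_and]
  exact Or.inr ⟨j, Or.inl (Or.inl rfl)⟩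

lemma qf_mem3 (j : Fin (n + 1 + 3 * ℓ)) (i : ℕ) (hi : i < n + p + ℓ - 1) :
    CQAtom.role () (.var (zV (n + p + ℓ) j.val (i + 1)))
      (.var (zV (n + p + ℓ) j.val i)) ∈ qf n p ℓ := by
  simp only [qf, List.mem_append, List.mem_map, List.mem_flatMap, List.mem_finRange,
    List.mem_cons, List.mem_singleton, List.not_mem_nil, or_false, false_or, true_and]
  exact Or.inr ⟨j, Or.inl (Or.inr ⟨⟨i, hi⟩, rfl⟩)⟩

lemma qf_mem4 (j : Fin (n + 1 + 3 * ℓ)) :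
    CQAtom.conc (.Z 0 j) (.var (zV (n + p + ℓ) j.val 0)) ∈ qf n p ℓ := by
  simp only [qf, List.mem_append, List.mem_map, List.mem_flatMap, List.mem_finRange,
    List.mem_cons, List.mem_singleton, List.not_mem_nil, or_false, false_or, true_and]
  exact Or.inr ⟨j, Or.inr rfl⟩

lemma entails_to_phiSat (hℓ : 0 < ℓ)
    (hent : Entails (Tf C) (Aalpha n p ℓ α) (qf n p ℓ)) : PhiSat C α := by
  have hN : 0 < n + p + ℓ := by omega
  obtain ⟨v, hv⟩ := hent (canonI C α) canon_models_Tf canon_models_A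
  -- the first variable is mapped to the root
  have hv0 : v 0 = CDom.root := by
    have h := hv _ qf_mem0
    simp only [CQAtom.sem, Term.sem] at h
    cases hveq : v 0 with
    | root => rfl
    | br k c =>
        rw [hveq] at h
        exfalso
        have h' : (0:Fin (n+p+ℓ+1)).val = k.val + 1 := h
        have h0 : (0:Fin (n+p+ℓ+1)).val = 0 := rfl
        omega
    | ch k j => rw [hveq] at h; exact (h : False).elim
  -- the `y`-chain of the query goes up the branching tree
  have hup : ∀ m : ℕ, m < n + p + ℓ →
      ∃ (k : Fin (n + p + ℓ)) (c : ℕ → Bool), k.val = m ∧ v (m + 1) = .br k c := by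
    intro m
    induction m with
    | zero =>
        intro _
        have h := hv _ (qf_mem1 0 hN)
        simp only [CQAtom.sem, Term.sem] at h
        rw [hv0] at h
        cases hveq : v 1 with
        | root => rw [hveq] at h; exact (h : False).elim
        | br k c => rw [hveq] at h; exact ⟨k, c, h, rfl⟩
        | ch k j => rw [hveq] at h; exact (h : False).elim
    | succ m ih =>
        intro hm
        obtain ⟨k, c, hk, hbr⟩ := ih (by omega)
        have h := hv _ (qf_mem1 (m + 1) hm)
        simp only [CQAtom.sem, Term.sem] at h
        rw [hbr] at h
        cases hveq : v (m + 1 + 1) with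
        | root => rw [hveq] at h; exact (h : False).elim
        | br k' c' =>
            rw [hveq] at h
            obtain ⟨h1, -⟩ : k'.val = k.val + 1 ∧ ∀ m' ≤ k.val, c' m' = c m' := h
            exact ⟨k', c', by omega, rfl⟩
        | ch k' j => rw [hveq] at h; exact (h : False).elim
  obtain ⟨kN, ν, hkN, hvN⟩ := hup (n + p + ℓ - 1) (by omega)
  rw [show n + p + ℓ - 1 + 1 = n + p + ℓ by omega] at hvN
  refine ⟨fun j : Fin n => ν j.val, fun q : Fin p => ν (n + q.val),
    fun g : Fin ℓ => ν (n + p + g.val), ?_⟩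
  intro cl hact
  obtain ⟨j, hj⟩ := clOf_surj cl
  -- the `z`-path of the query for clause `j`
  set N := n + p + ℓ with hNdef
  set g : ℕ → CDom (n + p + ℓ) (n + 1 + 3 * ℓ) :=
    fun i => if i = N then v N else v (zV N j.val i) with hgdef
  have hedge : ∀ i, i < N → (canonI C α).role () (g (i + 1)) (g i) := by
    intro i hi
    by_cases hiN : i + 1 = N
    · have h := hv _ (qf_mem2 j)
      simp only [CQAtom.sem, Term.sem] at h
      have e1 : g (i + 1) = v N := by rw [hgdef]; simp [hiN]; rfl
      have e2 : g i = v (zV N j.val (N - 1)) := by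
        rw [show i = N - 1 by omega, hgdef]
        exact if_neg (by omega : ¬ N - 1 = N)
      rw [e1, e2]; exact h
    · have h := hv _ (qf_mem3 j i (by omega))
      simp only [CQAtom.sem, Term.sem] at h
      have e1 : g (i + 1) = v (zV N j.val (i + 1)) := by
        rw [hgdef]; exact if_neg hiN
      have e2 : g i = v (zV N j.val i) := by
        rw [hgdef]; exact if_neg (by omega : ¬ i = N)
      rw [e1, e2]; exact h
  have hgood : ∀ m, m ≤ N → GoodP C ν (N - m) (g (N - m)) := by
    intro m
    induction m with
    | zero =>
        intro _
        have e : g N = v N := by rw [hgdef]; simp; rfl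
        rw [Nat.sub_zero, e, hvN]
        exact Or.inl ⟨_, ν, rfl, by omega, fun _ _ => rfl⟩
    | succ m ih =>
        intro hm
        have hg1 := ih (by omega)
        have hstep := hedge (N - m - 1) (by omega)
        rw [show N - m - 1 + 1 = N - m by omega] at hstep
        have := good_step (i := N - m - 1)
          (by rw [show N - m - 1 + 1 = N - m by omega]; exact hg1) hstep
        rw [show N - (m + 1) = N - m - 1 by omega]
        exact this
  have hg0 := hgood N (le_refl N)
  rw [Nat.sub_self] at hg0
  have hZ := hv _ (qf_mem4 j)
  simp only [CQAtom.sem, Term.sem] at hZ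
  have hg0e : g 0 = v (zV N j.val 0) := by
    simp only [hgdef]
    exact if_neg (by omega : ¬ (0:ℕ) = N)
  rw [← hg0e] at hZ
  rcases hg0 with ⟨k, c, hgc, hk, -⟩ | ⟨j', hgc, kk, hlit⟩ | ⟨hgc, -⟩
  · omega
  · rw [hgc] at hZ
    obtain ⟨-, hjj⟩ : (0 : Fin (n + p + ℓ + 1)).val = 0 ∧ j = j' := hZ
    subst hjj
    rw [← hj]
    unfold LitIn at hlit
    rcases hb : ν kk.val with _ | _ <;> rw [hb] at hlit <;> simp at hlit
    · exact Or.inr ⟨wOf n p ℓ kk, hlit, by rw [evalWith_wOf]; exact hb⟩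
    · exact Or.inl ⟨wOf n p ℓ kk, hlit, by rw [evalWith_wOf]; exact hb⟩
  · rw [hgc] at hZ
    obtain ⟨-, hjn, hα⟩ : (0 : Fin (n + p + ℓ + 1)).val = 0 ∧
        ∃ h : j.val < n, α ⟨j.val, h⟩ = true := hZ
    rw [clOf_lt hjn] at hj
    rw [← hj] at hact
    have : α ⟨j.val, hjn⟩ = false := hact
    rw [this] at hα
    exact (Bool.false_ne_true hα).elim

end Canon

section Dir1

variable {n p ℓ : ℕ} {C : Circuit (Fin n) (Fin p) ℓ} {α : Fin n → Bool}

lemma zV_decode {N : ℕ} (hN : 0 < N) (j i : ℕ) (hi : i < N) :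
    ¬ zV N j i < N + 1 ∧ (zV N j i - (N + 1)) / N = j ∧ (zV N j i - (N + 1)) % N = i := by
  unfold zV
  have h1 : N + 1 + j * N + i - (N + 1) = N * j + i := by
    rw [Nat.mul_comm N j]; generalize j * N = t; omega
  refine ⟨?_, ?_, ?_⟩
  · rw [Nat.mul_comm] at h1 ⊢; generalize j * N = t at *; omega
  · rw [h1, Nat.mul_add_div hN, Nat.div_eq_of_lt hi, Nat.add_zero]
  · rw [h1, Nat.mul_add_mod, Nat.mod_eq_of_lt hi]

lemma Tf_mem1 (i : Fin (n + p + ℓ)) (b : Bool) :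
    Ax.sub (.atom (.A i.castSucc)) (.exrb (.inv ()) (.atom (.X i b))) ∈ Tf C := by
  simp only [Tf, List.mem_append, List.mem_flatMap, List.mem_map, List.mem_finRange,
    List.mem_cons, List.mem_singleton, List.not_mem_nil, true_and, or_false, false_or,
    List.mem_ite_nil_right, List.mem_ite_nil_left]
  exact Or.inl (Or.inl (Or.inl (Or.inl (Or.inl ⟨i, b, by cases b <;> simp, Or.inl rfl⟩))))

lemma Tf_mem2 (i : Fin (n + p + ℓ)) (b : Bool) :
    Ax.sub (.atom (.X i b)) (.bc (.atom (.A i.succ))) ∈ Tf C := by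
  simp only [Tf, List.mem_append, List.mem_flatMap, List.mem_map, List.mem_finRange,
    List.mem_cons, List.mem_singleton, List.not_mem_nil, true_and, or_false, false_or,
    List.mem_ite_nil_right, List.mem_ite_nil_left]
  exact Or.inl (Or.inl (Or.inl (Or.inl (Or.inl ⟨i, b, by cases b <;> simp, Or.inr rfl⟩))))

lemma Tf_mem3neg {i : Fin (n + p + ℓ)} {j : Fin (n + 1 + 3 * ℓ)}
    (hm : wOf n p ℓ i ∈ clNeg C (clOf n ℓ j)) :
    Ax.sub (.atom (.X i false)) (.bc (.atom (.Z i.succ j))) ∈ Tf C := by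
  simp only [Tf, List.mem_append, List.mem_flatMap, List.mem_map, List.mem_finRange,
    List.mem_cons, List.mem_singleton, List.not_mem_nil, true_and, or_false, false_or,
    List.mem_ite_nil_right, List.mem_ite_nil_left]
  exact Or.inl (Or.inl (Or.inl (Or.inl (Or.inr ⟨i, j, Or.inl ⟨hm, rfl⟩⟩))))

lemma Tf_mem3pos {i : Fin (n + p + ℓ)} {j : Fin (n + 1 + 3 * ℓ)}
    (hm : wOf n p ℓ i ∈ clPos C (clOf n ℓ j)) :
    Ax.sub (.atom (.X i true)) (.bc (.atom (.Z i.succ j))) ∈ Tf C := by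
  simp only [Tf, List.mem_append, List.mem_flatMap, List.mem_map, List.mem_finRange,
    List.mem_cons, List.mem_singleton, List.not_mem_nil, true_and, or_false, false_or,
    List.mem_ite_nil_right, List.mem_ite_nil_left]
  exact Or.inl (Or.inl (Or.inl (Or.inl (Or.inr ⟨i, j, Or.inr ⟨hm, rfl⟩⟩))))

lemma Tf_mem4 (i : Fin (n + p + ℓ)) (j : Fin (n + 1 + 3 * ℓ)) :
    Ax.sub (.atom (.Z i.succ j)) (.exrb (.pos ()) (.atom (.Z i.castSucc j))) ∈ Tf C := by
  simp only [Tf, List.mem_append, List.mem_flatMap, List.mem_map, List.mem_finRange,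
    List.mem_cons, List.mem_singleton, List.not_mem_nil, true_and, or_false, false_or,
    List.mem_ite_nil_right, List.mem_ite_nil_left]
  exact Or.inl (Or.inl (Or.inl (Or.inr ⟨i, j, rfl⟩)))

section WithI

variable {I : Interp Unit (CName (n + p + ℓ) (n + 1 + 3 * ℓ)) Unit}
  (hT : ∀ ax ∈ Tf C, ax.sem I)

include hT

lemma sem_ax1 (i : Fin (n + p + ℓ)) (b : Bool) {u : I.Dom}
    (hu : I.conc (.A i.castSucc) u) : ∃ v, I.role () v u ∧ I.conc (.X i b) v := by
  have h := hT _ (Tf_mem1 (C := C) i b)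
  simp only [Ax.sem, Con.sem, BCon.sem, Role.sem] at h
  exact h u hu

lemma sem_ax2 (i : Fin (n + p + ℓ)) (b : Bool) {u : I.Dom}
    (hu : I.conc (.X i b) u) : I.conc (.A i.succ) u := by
  have h := hT _ (Tf_mem2 (C := C) i b)
  simp only [Ax.sem, Con.sem, BCon.sem] at h
  exact h u hu

lemma sem_ax3neg {i : Fin (n + p + ℓ)} {j : Fin (n + 1 + 3 * ℓ)}
    (hm : wOf n p ℓ i ∈ clNeg C (clOf n ℓ j)) {u : I.Dom}
    (hu : I.conc (.X i false) u) : I.conc (.Z i.succ j) u := by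
  have h := hT _ (Tf_mem3neg hm)
  simp only [Ax.sem, Con.sem, BCon.sem] at h
  exact h u hu

lemma sem_ax3pos {i : Fin (n + p + ℓ)} {j : Fin (n + 1 + 3 * ℓ)}
    (hm : wOf n p ℓ i ∈ clPos C (clOf n ℓ j)) {u : I.Dom}
    (hu : I.conc (.X i true) u) : I.conc (.Z i.succ j) u := by
  have h := hT _ (Tf_mem3pos hm)
  simp only [Ax.sem, Con.sem, BCon.sem] at h
  exact h u hu

lemma sem_ax4 (i : Fin (n + p + ℓ)) (j : Fin (n + 1 + 3 * ℓ)) {u : I.Dom}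
    (hu : I.conc (.Z i.succ j) u) :
    ∃ v, I.role () u v ∧ I.conc (.Z i.castSucc j) v := by
  have h := hT _ (Tf_mem4 (C := C) i j)
  simp only [Ax.sem, Con.sem, BCon.sem, Role.sem] at h
  exact h u hu

lemma chainU (hA : ∀ g ∈ Aalpha n p ℓ α, g.sem I) (ν : Fin (n + p + ℓ) → Bool) :
    ∀ k, (hk : k ≤ n + p + ℓ) → ∃ u : ℕ → I.Dom, u 0 = I.ind () ∧
      ∀ m, (hm : m < k) → I.role () (u (m + 1)) (u m) ∧
        I.conc (.X ⟨m, by omega⟩ (ν ⟨m, by omega⟩)) (u (m + 1)) := by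
  intro k
  induction k with
  | zero => exact fun _ => ⟨fun _ => I.ind (), rfl, fun m hm => absurd hm (by omega)⟩
  | succ k ih =>
      intro hk
      obtain ⟨u, hu0, hch⟩ := ih (by omega)
      have hAk : I.conc (.A ⟨k, by omega⟩) (u k) := by
        cases k with
        | zero =>
            have h0 : GAtom.conc (CName.A (0 : Fin (n + p + ℓ + 1))) () ∈ Aalpha n p ℓ α :=
              List.mem_cons_self
            have := hA _ h0
            rw [hu0, show (⟨0, by omega⟩ : Fin (n + p + ℓ + 1)) = 0 from Fin.ext (by simp)]
            exact this
        | succ m =>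
            have hx := (hch m (by omega)).2
            have := sem_ax2 hT ⟨m, by omega⟩ (ν ⟨m, by omega⟩) hx
            exact this
      obtain ⟨v, hvr, hvx⟩ := sem_ax1 hT ⟨k, by omega⟩ (ν ⟨k, by omega⟩) hAk
      refine ⟨fun m => if m = k + 1 then v else u m, by simp [hu0], ?_⟩
      intro m hm
      rcases Nat.lt_succ_iff_lt_or_eq.1 hm with hmk | rfl
      · have h := hch m hmk
        simp only [if_neg (by omega : ¬ m + 1 = k + 1), if_neg (by omega : ¬ m = k + 1)]
        exact h
      · simp only [if_pos rfl, if_neg (by omega : ¬ m = m + 1)]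
        exact ⟨hvr, hvx⟩

lemma chainD (j : Fin (n + 1 + 3 * ℓ)) :
    ∀ i, (hi : i ≤ n + p + ℓ) → ∀ v : I.Dom, I.conc (.Z ⟨i, by omega⟩ j) v →
      ∃ w : ℕ → I.Dom, w i = v ∧ ∀ m, (hm : m < i) → I.role () (w (m + 1)) (w m) ∧
        I.conc (.Z ⟨m, by omega⟩ j) (w m) := by
  intro i
  induction i with
  | zero => exact fun _ v hv => ⟨fun _ => v, rfl, fun m hm => absurd hm (by omega)⟩
  | succ i ih =>
      intro hi v hv
      have hv' : I.conc (.Z (⟨i, by omega⟩ : Fin (n + p + ℓ)).succ j) v := hv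
      obtain ⟨v', hr, hz⟩ := sem_ax4 hT ⟨i, by omega⟩ j hv'
      obtain ⟨w', hw'i, hw'⟩ := ih (by omega) v' hz
      refine ⟨fun m => if m = i + 1 then v else w' m, by simp, ?_⟩
      intro m hm
      rcases Nat.lt_succ_iff_lt_or_eq.1 hm with hmk | rfl
      · have h := hw' m hmk
        simp only [if_neg (by omega : ¬ m + 1 = i + 1), if_neg (by omega : ¬ m = i + 1)]
        exact h
      · simp only [if_pos rfl, if_neg (by omega : ¬ m = m + 1)]
        rw [hw'i]
        exact ⟨hr, hz⟩

omit hT in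
lemma phiSat_to_entails (hl : 0 < ℓ) (hsat : PhiSat C α) :
    Entails (Tf C) (Aalpha n p ℓ α) (qf n p ℓ) := by
  classical
  obtain ⟨a, b, c, hcl⟩ := hsat
  intro I hT hA
  have hN : 0 < n + p + ℓ := by omega
  obtain ⟨u, hu0, hch⟩ :=
    chainU (α := α) hT hA (fun i => (wOf n p ℓ i).evalWith a b c) (n + p + ℓ) le_rfl
  have hz : ∀ j : Fin (n + 1 + 3 * ℓ), ∃ g : ℕ → I.Dom,
      I.role () (u (n + p + ℓ)) (g (n + p + ℓ - 1)) ∧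
      (∀ m, m + 1 < n + p + ℓ → I.role () (g (m + 1)) (g m)) ∧
      I.conc (.Z 0 j) (g 0) := by
    intro j
    by_cases hAct : ActiveCl α (clOf n ℓ j)
    · -- active clause: satisfied by some literal
      have hcs := hcl _ hAct
      have hlit : ∃ i : Fin (n + p + ℓ), I.conc (.Z i.succ j) (u (i.val + 1)) := by
        rcases hcs with ⟨w, hw, hwe⟩ | ⟨w, hw, hwe⟩
        · obtain ⟨i, rfl⟩ := wOf_surj w
          have hx := (hch i.val i.isLt).2
          simp only [] at hx
          rw [show (⟨i.val, by omega⟩ : Fin (n + p + ℓ)) = i from Fin.ext rfl] at hx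
          rw [hwe] at hx
          exact ⟨i, sem_ax3pos hT hw hx⟩
        · obtain ⟨i, rfl⟩ := wOf_surj w
          have hx := (hch i.val i.isLt).2
          simp only [] at hx
          rw [show (⟨i.val, by omega⟩ : Fin (n + p + ℓ)) = i from Fin.ext rfl] at hx
          rw [hwe] at hx
          exact ⟨i, sem_ax3neg hT hw hx⟩
      obtain ⟨i, hzi⟩ := hlit
      have hiN := i.isLt
      have hzi' : I.conc (.Z ⟨i.val + 1, by omega⟩ j) (u (i.val + 1)) := hzi
      obtain ⟨w, hwi, hw⟩ := chainD hT j (i.val + 1) (by omega) _ hzi'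
      refine ⟨fun m => if i.val + 1 ≤ m then u m else w m, ?_, ?_, ?_⟩
      · by_cases hc1 : i.val + 1 ≤ n + p + ℓ - 1
        · simp only [if_pos hc1]
          have h := (hch (n + p + ℓ - 1) (by omega)).1
          rw [show n + p + ℓ - 1 + 1 = n + p + ℓ by omega] at h
          exact h
        · simp only [if_neg hc1]
          have h := (hw (n + p + ℓ - 1) (by omega)).1
          rw [show n + p + ℓ - 1 + 1 = i.val + 1 by omega, hwi] at h
          rw [show i.val + 1 = n + p + ℓ by omega] at h
          exact h
      · intro m hm1
        by_cases hc1 : i.val + 1 ≤ m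
        · simp only [if_pos (by omega : i.val + 1 ≤ m + 1), if_pos hc1]
          exact (hch m (by omega)).1
        · by_cases hc2 : i.val + 1 ≤ m + 1
          · simp only [if_pos hc2, if_neg hc1]
            have h := (hw m (by omega)).1
            rw [show m + 1 = i.val + 1 by omega, hwi] at h
            rw [show m + 1 = i.val + 1 by omega]
            exact h
          · simp only [if_neg hc2, if_neg hc1]
            exact (hw m (by omega)).1
      · simp only [if_neg (by omega : ¬ i.val + 1 ≤ 0)]
        have h := (hw 0 (by omega)).2
        rw [show (⟨0, by omega⟩ : Fin (n + p + ℓ + 1)) = 0 from Fin.ext (by simp)] at h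
        exact h
    · -- inactive clause: use `Z_{0,j}(a)` from the ABox
      obtain ⟨j', hcj, hαj⟩ := not_active hAct
      obtain ⟨hjn, hj'⟩ := clOf_neg hcj
      have hmem : GAtom.conc (CName.Z (0 : Fin (n + p + ℓ + 1))
          (⟨j'.val, by have := j'.isLt; omega⟩ : Fin (n + 1 + 3 * ℓ))) ()
            ∈ Aalpha n p ℓ α := by
        simp only [Aalpha, List.mem_cons, List.mem_filterMap, List.mem_finRange, true_and]
        exact Or.inr ⟨j', by rw [hαj]; simp⟩
      have hzr := hA _ hmem
      have hze : (⟨j'.val, by have := j'.isLt; omega⟩ : Fin (n + 1 + 3 * ℓ)) = j :=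
        Fin.ext (by simp [hj'])
      rw [hze] at hzr
      refine ⟨u, ?_, ?_, ?_⟩
      · have h := (hch (n + p + ℓ - 1) (by omega)).1
        rw [show n + p + ℓ - 1 + 1 = n + p + ℓ by omega] at h
        exact h
      · exact fun m hm => (hch m (by omega)).1
      · rw [hu0]
        exact hzr
  choose gf hg1 hg2 hg3 using hz
  set V : ℕ → I.Dom := fun m =>
    if m < n + p + ℓ + 1 then u m
    else if h2 : (m - (n + p + ℓ + 1)) / (n + p + ℓ) < n + 1 + 3 * ℓ
      then gf ⟨(m - (n + p + ℓ + 1)) / (n + p + ℓ), h2⟩ ((m - (n + p + ℓ + 1)) % (n + p + ℓ))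
      else I.ind () with hVdef
  have hVu : ∀ m, m < n + p + ℓ + 1 → V m = u m := by
    intro m hm
    simp only [hVdef]
    rw [if_pos hm]
  have hVz : ∀ (j : Fin (n + 1 + 3 * ℓ)) (i : ℕ), i < n + p + ℓ →
      V (zV (n + p + ℓ) j.val i) = gf j i := by
    intro j i hi
    obtain ⟨h1, h2, h3⟩ := zV_decode hN j.val i hi
    simp only [hVdef]
    rw [if_neg h1, dif_pos (by rw [h2]; exact j.isLt)]
    have he : (⟨(zV (n + p + ℓ) j.val i - (n + p + ℓ + 1)) / (n + p + ℓ),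
        by rw [h2]; exact j.isLt⟩ : Fin (n + 1 + 3 * ℓ)) = j := Fin.ext (by simpa using h2)
    rw [he, h3]
  refine ⟨V, ?_⟩
  intro at_ hat
  simp only [qf, List.mem_append, List.mem_map, List.mem_flatMap, List.mem_finRange,
    List.mem_cons, List.mem_singleton, List.not_mem_nil, or_false, false_or,
    true_and] at hat
  rcases hat with (rfl | ⟨i, rfl⟩) | ⟨j, ((rfl | ⟨i, rfl⟩) | rfl)⟩
  · simp only [CQAtom.sem, Term.sem]
    rw [hVu 0 (by omega), hu0]
    exact hA _ List.mem_cons_self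
  · simp only [CQAtom.sem, Term.sem]
    rw [hVu (i.val + 1) (by have := i.isLt; omega), hVu i.val (by have := i.isLt; omega)]
    exact (hch i.val i.isLt).1
  · simp only [CQAtom.sem, Term.sem]
    rw [hVu (n + p + ℓ) (by omega), hVz j (n + p + ℓ - 1) (by omega)]
    exact hg1 j
  · simp only [CQAtom.sem, Term.sem]
    have hi := i.isLt
    rw [hVz j (i.val + 1) (by omega), hVz j i.val (by omega)]
    exact hg2 j i.val (by omega)
  · simp only [CQAtom.sem, Term.sem]
    rw [hVz j 0 hN]
    exact hg3 j

end WithI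

end Dir1


/-- Let `C` be a Boolean circuit with `n` inputs, `p` advice
inputs and only `¬`- and `∧`-gates, and let `T_f`, `q_f`, `A_α` and `φ_α` be
the TBox, conjunctive query, ABoxes and CNFs constructed from `C`.  Then for
every `α ∈ {0,1}ⁿ` : `(T_f, A_α) ⊨ q_f` iff `φ_α` is satisfiable. -/
theorem statement2 (n p ℓ : ℕ) (C : Circuit (Fin n) (Fin p) ℓ)
    (hC : C.OnlyNotAnd) :
    ∀ α : Fin n → Bool,
      (Entails (Tf C) (Aalpha n p ℓ α) (qf n p ℓ) ↔ PhiSat C α) := by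
  intro α
  have hl : 0 < ℓ := C.out.pos
  exact ⟨entails_to_phiSat hl, phiSat_to_entails hl⟩

end QRew
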